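/- arXiv:2412.18949 — 2 statements merged into one kernel-verified Lean document; each statement's English description precedes it below -/
import Mathlib

section
/- For a nonempty finite metric space X, an integer n with 2 ≤ n ≤ #X, and real λ ≥ 2·diam X, one has 2·d_GH(λΔₙ, X) = λ − αₙ(X), where αₙ(X) = sup over partitions D of X into n nonempty parts of α(D). -/
/-- `Δ` is a simplex of cardinality `n` and non-zero distance `l`. -/
def IsSimplexOf (Δ : Type) [MetricSpace Δ] [Fintype Δ] (n : ℕ) (l : ℝ) : Prop :=
  Fintype.card Δ = n ∧ ∀ x y : Δ, x ≠ y → dist x y = l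

/-- The distance between two subsets of a metric space. -/
noncomputable def setDist {X : Type} [MetricSpace X] (A B : Set X) : ℝ :=
  sInf {d | ∃ a ∈ A, ∃ b ∈ B, dist a b = d}

/-- The value `α(D)` of the partition of `X` into the fibers of `f : X → Fin n`:
the infimum of the distances between distinct parts. -/
noncomputable def partAlpha {X : Type} [MetricSpace X] {n : ℕ} (f : X → Fin n) : ℝ :=
  sInf {d | ∃ i j : Fin n, i ≠ j ∧ d = setDist (f ⁻¹' {i}) (f ⁻¹' {j})}

/-- `αₙ(X)`: the supremum of `α(D)` over all partitions `D` of `X` into `n`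
nonempty parts (encoded as surjections `X → Fin n`). -/
noncomputable def alphaN (X : Type) [MetricSpace X] (n : ℕ) : ℝ :=
  sSup {a | ∃ f : X → Fin n, Function.Surjective f ∧ a = partAlpha f}

/-!
Put `a = α(D)` and `c = (l - a) / 2`. Gluing `Δ` to `X` by declaring the distance from a vertex
`p` to `x ∈ X` to be `c` plus the distance from `x` to the part of `D` labelled by `p` gives a
metric in which `Δ` and `X` are at Hausdorff distance `c`; the triangle inequality holds because
`diam X ≤ l - diam X ≤ l - a` and because distinct parts are `a` apart. Hence
`2 d_GH ≤ l - αₙ(X)`. Conversely, if `2 d_GH < l`, sending each point of `X` to a vertex within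
`d_GH` of it in an optimal realization is a surjection onto the `n` vertices, and points sent to
distinct vertices are at least `l - 2 d_GH` apart, so `αₙ(X) ≥ l - 2 d_GH`.
-/

open Metric Set Function GromovHausdorff

section Partition

variable {X : Type} [MetricSpace X] {n : ℕ}

lemma setDist_nonneg (A B : Set X) : 0 ≤ setDist A B :=
  Real.sInf_nonneg <| by rintro _ ⟨a, -, b, -, rfl⟩; exact dist_nonneg

lemma setDist_le_dist {A B : Set X} {a b : X} (ha : a ∈ A) (hb : b ∈ B) :
    setDist A B ≤ dist a b :=
  csInf_le ⟨0, by rintro _ ⟨a, -, b, -, rfl⟩; exact dist_nonneg⟩ ⟨a, ha, b, hb, rfl⟩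

lemma le_setDist {A B : Set X} {c : ℝ} (hA : A.Nonempty) (hB : B.Nonempty)
    (h : ∀ a ∈ A, ∀ b ∈ B, c ≤ dist a b) : c ≤ setDist A B := by
  obtain ⟨a, ha⟩ := hA
  obtain ⟨b, hb⟩ := hB
  refine le_csInf ⟨dist a b, a, ha, b, hb, rfl⟩ ?_
  rintro _ ⟨a', ha', b', hb', rfl⟩
  exact h a' ha' b' hb'

lemma partAlpha_nonneg (f : X → Fin n) : 0 ≤ partAlpha f :=
  Real.sInf_nonneg <| by rintro _ ⟨i, j, -, rfl⟩; exact setDist_nonneg _ _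

lemma partAlpha_le_dist (f : X → Fin n) {x y : X} (h : f x ≠ f y) : partAlpha f ≤ dist x y :=
  calc partAlpha f ≤ setDist (f ⁻¹' {f x}) (f ⁻¹' {f y}) :=
        csInf_le ⟨0, by rintro _ ⟨i, j, -, rfl⟩; exact setDist_nonneg _ _⟩ ⟨_, _, h, rfl⟩
    _ ≤ dist x y := setDist_le_dist rfl rfl

lemma le_partAlpha (hn2 : 2 ≤ n) {f : X → Fin n} (hf : Surjective f) {c : ℝ}
    (h : ∀ x y, f x ≠ f y → c ≤ dist x y) : c ≤ partAlpha f := by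
  have hij : (⟨0, by omega⟩ : Fin n) ≠ ⟨1, by omega⟩ := by simp
  refine le_csInf ⟨_, _, _, hij, rfl⟩ ?_
  rintro _ ⟨i, j, hne, rfl⟩
  obtain ⟨x, rfl⟩ := hf i
  obtain ⟨y, rfl⟩ := hf j
  refine le_setDist ⟨x, rfl⟩ ⟨y, rfl⟩ fun x' hx' y' hy' ↦ h x' y' ?_
  rw [mem_preimage, mem_singleton_iff] at hx' hy'
  rwa [hx', hy']

lemma partAlpha_le_diam [BoundedSpace X] (hn2 : 2 ≤ n) {f : X → Fin n} (hf : Surjective f) :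
    partAlpha f ≤ diam (univ : Set X) := by
  obtain ⟨x, hx⟩ := hf ⟨0, by omega⟩
  obtain ⟨y, hy⟩ := hf ⟨1, by omega⟩
  calc partAlpha f ≤ dist x y := partAlpha_le_dist f (by simp [hx, hy])
    _ ≤ diam univ := dist_le_diam_of_mem (Bornology.IsBounded.all _) (mem_univ x) (mem_univ y)

lemma partAlpha_le_alphaN [BoundedSpace X] (hn2 : 2 ≤ n) {f : X → Fin n} (hf : Surjective f) :
    partAlpha f ≤ alphaN X n := by
  refine le_csSup ⟨diam (univ : Set X), ?_⟩ ⟨f, hf, rfl⟩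
  rintro _ ⟨g, hg, rfl⟩
  exact partAlpha_le_diam hn2 hg

lemma alphaN_le [Fintype X] (hn0 : 0 < n) (hn : n ≤ Fintype.card X) {c : ℝ}
    (h : ∀ f : X → Fin n, Surjective f → partAlpha f ≤ c) : alphaN X n ≤ c := by
  obtain ⟨f, hf⟩ : ∃ f : X → Fin n, Surjective f :=
    exists_surjective_iff.2 ⟨⟨fun _ ↦ ⟨0, hn0⟩⟩,
      Embedding.nonempty_of_card_le (by rwa [Fintype.card_fin])⟩
  refine csSup_le ⟨_, f, hf, rfl⟩ ?_
  rintro _ ⟨g, hg, rfl⟩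
  exact h g hg

lemma alphaN_nonneg (X : Type) [MetricSpace X] (n : ℕ) : 0 ≤ alphaN X n :=
  Real.sSup_nonneg <| by rintro _ ⟨f, -, rfl⟩; exact partAlpha_nonneg f

end Partition

lemma IsSimplexOf.pos {Δ : Type} [MetricSpace Δ] [Fintype Δ] {n : ℕ} {l : ℝ}
    (hΔ : IsSimplexOf Δ n l) (hn2 : 2 ≤ n) : 0 < l := by
  obtain ⟨p, q, hpq⟩ := Fintype.exists_pair_of_one_lt_card (hΔ.1 ▸ hn2 : 1 < Fintype.card Δ)
  exact hΔ.2 p q hpq ▸ dist_pos.2 hpq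

section InfDist

variable {X : Type} [MetricSpace X] {s t : Set X}

lemma infDist_le_add_infDist_of_dist_le {r : ℝ} (hs : s.Nonempty) (ht : t.Nonempty)
    (h : ∀ x y : X, dist x y ≤ r) (z : X) : infDist z s ≤ r + infDist z t := by
  obtain ⟨y, hy⟩ := hs
  rw [← sub_le_iff_le_add']
  refine (le_infDist ht).2 fun v _ ↦ ?_
  have := infDist_le_infDist_add_dist (x := z) (y := v) (s := s)
  have := infDist_le_dist_of_mem (x := v) hy
  linarith [h v y]

lemma le_infDist_add_infDist {a : ℝ} (hs : s.Nonempty) (ht : t.Nonempty)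
    (h : ∀ u ∈ s, ∀ v ∈ t, a ≤ dist u v) (y : X) : a ≤ infDist y s + infDist y t := by
  rw [← sub_le_iff_le_add]
  refine (le_infDist hs).2 fun u hu ↦ ?_
  have := (le_infDist ht).2 (h u hu)
  have := infDist_le_infDist_add_dist (x := u) (y := y) (s := t)
  linarith [dist_comm u y]

end InfDist

/-- A copy of `Δ ⊕ X`, which already carries the metric `Sum.metricSpace`. -/
inductive Glued (Δ X : Type) : Type
  | left : Δ → Glued Δ X
  | right : X → Glued Δ X

section Glued

variable {Δ X : Type} [MetricSpace Δ] [MetricSpace X] (F : X → Δ) (c : ℝ)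

noncomputable def gluedDist : Glued Δ X → Glued Δ X → ℝ
  | .left p, .left q => dist p q
  | .left p, .right x | .right x, .left p => c + infDist x (F ⁻¹' {p})
  | .right x, .right y => dist x y

lemma gluedDist_self (a : Glued Δ X) : gluedDist F c a a = 0 := by
  cases a <;> exact dist_self _

lemma gluedDist_comm (a b : Glued Δ X) : gluedDist F c a b = gluedDist F c b a := by
  cases a <;> cases b <;> simp only [gluedDist, dist_comm]

variable {F c}

lemma eq_of_gluedDist_eq_zero (hc : 0 < c) {a b : Glued Δ X} (h : gluedDist F c a b = 0) :
    a = b := by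
  rcases a with p | x <;> rcases b with q | y <;> simp only [gluedDist] at h
  · rw [dist_eq_zero.1 h]
  · linarith [infDist_nonneg (x := y) (s := F ⁻¹' {p})]
  · linarith [infDist_nonneg (x := x) (s := F ⁻¹' {q})]
  · rw [dist_eq_zero.1 h]

variable {l : ℝ} (hΔ : ∀ p q : Δ, p ≠ q → dist p q = l) (hF : Surjective F) (hc : 0 < c)
  (hcl : 2 * c ≤ l) (hdiam : ∀ x y : X, dist x y ≤ 2 * c)
  (hsep : ∀ x y, F x ≠ F y → l - 2 * c ≤ dist x y)
include hΔ hF hc hcl hdiam hsep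

lemma gluedDist_triangle (a b d : Glued Δ X) :
    gluedDist F c a d ≤ gluedDist F c a b + gluedDist F c b d := by
  have hfiber (p : Δ) : (F ⁻¹' {p}).Nonempty := hF p
  have hshift (x : X) (p q : Δ) :
      infDist x (F ⁻¹' {p}) ≤ dist p q + infDist x (F ⁻¹' {q}) := by
    rcases eq_or_ne p q with rfl | hpq
    · simp
    · rw [hΔ p q hpq]
      exact infDist_le_add_infDist_of_dist_le (hfiber p) (hfiber q)
        (fun x y ↦ (hdiam x y).trans hcl) x
  have hvertex (x : X) (p q : Δ) :
      dist p q ≤ 2 * c + infDist x (F ⁻¹' {p}) + infDist x (F ⁻¹' {q}) := by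
    rcases eq_or_ne p q with rfl | hpq
    · simp only [dist_self]
      linarith [infDist_nonneg (x := x) (s := F ⁻¹' {p})]
    · have := le_infDist_add_infDist (hfiber p) (hfiber q) (y := x) <| by
        rintro u rfl v hv
        exact hsep u v fun h ↦ hpq (h.trans hv)
      rw [hΔ p q hpq]
      linarith
  rcases a with p | x <;> rcases b with q | y <;> rcases d with r | z <;> simp only [gluedDist]
  · exact dist_triangle p q r
  · linarith [hshift z p q]
  · linarith [hvertex y p r]
  · linarith [infDist_le_infDist_add_dist (x := z) (y := y) (s := F ⁻¹' {p}), dist_comm y z]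
  · linarith [hshift x r q, dist_comm q r]
  · linarith [hdiam x z, infDist_nonneg (x := x) (s := F ⁻¹' {q}),
      infDist_nonneg (x := z) (s := F ⁻¹' {q})]
  · linarith [infDist_le_infDist_add_dist (x := x) (y := y) (s := F ⁻¹' {r})]
  · exact dist_triangle x y z

theorem ghDist_le_of_surjective_of_separated [CompactSpace Δ] [Nonempty Δ] [CompactSpace X]
    [Nonempty X] : ghDist Δ X ≤ c := by
  let _ : MetricSpace (Glued Δ X) :=
    { dist := gluedDist F c
      dist_self := gluedDist_self F c
      dist_comm := gluedDist_comm F c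
      dist_triangle := gluedDist_triangle hΔ hF hc hcl hdiam hsep
      eq_of_dist_eq_zero := eq_of_gluedDist_eq_zero hc }
  calc ghDist Δ X ≤ hausdorffDist (range (Glued.left (X := X))) (range Glued.right) :=
        ghDist_le_hausdorffDist (.of_dist_eq fun _ _ ↦ rfl) (.of_dist_eq fun _ _ ↦ rfl)
    _ ≤ c := by
      refine hausdorffDist_le_of_mem_dist hc.le ?_ ?_
      · rintro _ ⟨p, rfl⟩
        obtain ⟨x, hx⟩ := hF p
        refine ⟨.right x, mem_range_self x, ?_⟩
        show c + infDist x (F ⁻¹' {p}) ≤ c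
        rw [infDist_zero_of_mem (s := F ⁻¹' {p}) hx, add_zero]
      · rintro _ ⟨x, rfl⟩
        refine ⟨.left (F x), mem_range_self _, ?_⟩
        show c + infDist x (F ⁻¹' {F x}) ≤ c
        rw [infDist_zero_of_mem (s := F ⁻¹' {F x}) rfl, add_zero]

end Glued

lemma IsCompact.exists_dist_le_hausdorffDist {Z : Type} [MetricSpace Z] {s t : Set Z}
    (hs : IsCompact s) (ht : IsCompact t) (hne : t.Nonempty) {x : Z} (hx : x ∈ s) :
    ∃ y ∈ t, dist x y ≤ hausdorffDist s t := by
  obtain ⟨y, hy, hxy⟩ := ht.exists_infDist_eq_dist hne x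
  refine ⟨y, hy, hxy ▸ infDist_le_hausdorffDist_of_mem hx ?_⟩
  exact hausdorffEDist_ne_top_of_nonempty_of_bounded ⟨x, hx⟩ hne hs.isBounded ht.isBounded

theorem exists_surjective_separated_of_two_ghDist_lt {Δ X : Type} [MetricSpace Δ]
    [CompactSpace Δ] [Nonempty Δ] [MetricSpace X] [CompactSpace X] [Nonempty X] {l : ℝ}
    (hΔ : ∀ p q : Δ, p ≠ q → dist p q = l) (hlt : 2 * ghDist Δ X < l) :
    ∃ F : X → Δ, Surjective F ∧ ∀ x y, F x ≠ F y → l - 2 * ghDist Δ X ≤ dist x y := by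
  set ι := optimalGHInjl Δ X
  set κ := optimalGHInjr Δ X
  have hι : Isometry ι := isometry_optimalGHInjl Δ X
  have hκ : Isometry κ := isometry_optimalGHInjr Δ X
  have hιc : IsCompact (range ι) := isCompact_range hι.continuous
  have hκc : IsCompact (range κ) := isCompact_range hκ.continuous
  have near_vertex (x : X) : ∃ p, dist (ι p) (κ x) ≤ ghDist Δ X := by
    obtain ⟨_, ⟨p, rfl⟩, h⟩ :=
      hκc.exists_dist_le_hausdorffDist hιc (range_nonempty ι) (mem_range_self x)
    exact ⟨p, by rwa [dist_comm, hausdorffDist_comm, hausdorffDist_optimal] at h⟩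
  have near_point (p : Δ) : ∃ x, dist (ι p) (κ x) ≤ ghDist Δ X := by
    obtain ⟨_, ⟨x, rfl⟩, h⟩ :=
      hιc.exists_dist_le_hausdorffDist hκc (range_nonempty κ) (mem_range_self p)
    exact ⟨x, by rwa [hausdorffDist_optimal] at h⟩
  have far {p q : Δ} {x y : X} (hpq : p ≠ q) (hx : dist (ι p) (κ x) ≤ ghDist Δ X)
      (hy : dist (ι q) (κ y) ≤ ghDist Δ X) : l - 2 * ghDist Δ X ≤ dist x y := by
    have := dist_triangle4 (ι p) (κ x) (κ y) (ι q)
    rw [hι.dist_eq, hΔ p q hpq, hκ.dist_eq, dist_comm (κ y)] at this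
    linarith
  choose F hF using near_vertex
  refine ⟨F, fun p ↦ ?_, fun x y hxy ↦ far hxy (hF x) (hF y)⟩
  obtain ⟨x, hx⟩ := near_point p
  by_contra! hne
  have := far (hne x) (hF x) hx
  rw [dist_self] at this
  linarith

section Simplex

variable {X Δ : Type} [MetricSpace X] [Fintype X] [Nonempty X] [MetricSpace Δ] [Fintype Δ]
  [Nonempty Δ] {n : ℕ} {l : ℝ}

lemma two_ghDist_le_sub_partAlpha (hΔ : IsSimplexOf Δ n l) (hn2 : 2 ≤ n)
    (hl : 2 * diam (univ : Set X) ≤ l) {f : X → Fin n} (hf : Surjective f) :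
    2 * ghDist Δ X ≤ l - partAlpha f := by
  let e : Δ ≃ Fin n := Fintype.equivFinOfCardEq hΔ.1
  have ha0 := partAlpha_nonneg f
  have haD := partAlpha_le_diam hn2 hf
  have hl0 := hΔ.pos hn2
  have hdiam (x y : X) : dist x y ≤ diam (univ : Set X) :=
    dist_le_diam_of_mem (Bornology.IsBounded.all univ) (mem_univ x) (mem_univ y)
  have := ghDist_le_of_surjective_of_separated (F := e.symm ∘ f) (c := (l - partAlpha f) / 2)
    hΔ.2 (e.symm.surjective.comp hf) (by linarith) (by linarith)
    (fun x y ↦ by linarith [hdiam x y])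
    (fun x y hxy ↦ by linarith [partAlpha_le_dist f (hxy ∘ congrArg e.symm)])
  linarith

lemma sub_alphaN_le_two_ghDist (hΔ : IsSimplexOf Δ n l) (hn2 : 2 ≤ n) :
    l - alphaN X n ≤ 2 * ghDist Δ X := by
  rcases le_or_gt l (2 * ghDist Δ X) with hle | hlt
  · linarith [alphaN_nonneg X n]
  obtain ⟨F, hF, hsep⟩ := exists_surjective_separated_of_two_ghDist_lt hΔ.2 hlt
  let e : Δ ≃ Fin n := Fintype.equivFinOfCardEq hΔ.1
  have hf : Surjective (e ∘ F) := e.surjective.comp hF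
  have := le_partAlpha hn2 hf fun x y hxy ↦ hsep x y (hxy ∘ congrArg e)
  linarith [partAlpha_le_alphaN hn2 hf]

end Simplex

/-- For a nonempty finite metric space `X`, `2 ≤ n ≤ #X` and `l ≥ 2 diam X`,
`2 d_GH(lΔₙ, X) = l − αₙ(X)`. -/
theorem two_ghDist_simplex_of_big_lambda (X Δ : Type) [MetricSpace X] [Fintype X]
    [Nonempty X] [MetricSpace Δ] [Fintype Δ] [Nonempty Δ] (n : ℕ) (l : ℝ)
    (hΔ : IsSimplexOf Δ n l) (hn2 : 2 ≤ n) (hn : n ≤ Fintype.card X)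
    (hl : 2 * Metric.diam (Set.univ : Set X) ≤ l) :
    2 * GromovHausdorff.ghDist Δ X = l - alphaN X n := by
  refine le_antisymm ?_ (sub_alphaN_le_two_ghDist hΔ hn2)
  have : alphaN X n ≤ l - 2 * ghDist Δ X := alphaN_le (by omega) hn fun f hf ↦ by
    linarith [two_ghDist_le_sub_partAlpha hΔ hn2 hl hf]
  linarith
end

section
/- If X and Y are finite metric spaces such that d_GH(λΔₙ, X) = d_GH(λΔₙ, Y) for all positive integers n and all λ ≥ 0, then #X = #Y, diam X = diam Y, and the mst-spectra of X and Y coincide. -/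
/-- The multiset of edge lengths of a graph `G` on a finite metric space `V`. -/
noncomputable def edgeLengths {V : Type} [MetricSpace V] [Fintype V] (G : SimpleGraph V) :
    Multiset ℝ :=
  (G.edgeSet.toFinite.toFinset).val.map
    (Sym2.lift ⟨fun x y => dist x y, fun _ _ => dist_comm _ _⟩)

/-- The length of a graph `G` on a finite metric space: the sum of the lengths of its edges. -/
noncomputable def graphLength {V : Type} [MetricSpace V] [Fintype V] (G : SimpleGraph V) : ℝ :=
  (edgeLengths G).sum

/-- `G` is a minimal spanning tree on the finite metric space `V`: a tree with vertex set `V`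
whose length is minimal among all such trees. -/
def IsMST {V : Type} [MetricSpace V] [Fintype V] (G : SimpleGraph V) : Prop :=
  G.IsTree ∧ ∀ H : SimpleGraph V, H.IsTree → graphLength G ≤ graphLength H

namespace SimpleGraph

variable {V : Type*} {G : SimpleGraph V}

theorem Walk.reachable_deleteEdges_singleton_cases {a b : V} (w : G.Walk a b) (u v : V) :
    (G.deleteEdges {s(u, v)}).Reachable a b ∨
      ((G.deleteEdges {s(u, v)}).Reachable a u ∧ (G.deleteEdges {s(u, v)}).Reachable v b) ∨
      ((G.deleteEdges {s(u, v)}).Reachable a v ∧ (G.deleteEdges {s(u, v)}).Reachable u b) := by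
  induction w with
  | nil => exact .inl .rfl
  | @cons a c b hac w ih =>
    by_cases he : s(a, c) = s(u, v)
    · rcases Sym2.eq_iff.mp he with ⟨rfl, rfl⟩ | ⟨rfl, rfl⟩ <;>
        rcases ih with h | ⟨-, h⟩ | ⟨-, h⟩ <;> simp_all
    · have hac' : (G.deleteEdges {s(u, v)}).Reachable a c :=
        Adj.reachable (by simpa [deleteEdges_adj] using And.intro hac he)
      rcases ih with h | ⟨h₁, h₂⟩ | ⟨h₁, h₂⟩
      · exact .inl (hac'.trans h)
      · exact .inr (.inl ⟨hac'.trans h₁, h₂⟩)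
      · exact .inr (.inr ⟨hac'.trans h₁, h₂⟩)

theorem card_le_card_edgeSet_add_card_connectedComponent [Finite V] (G : SimpleGraph V) :
    Nat.card V ≤ Nat.card G.edgeSet + Nat.card G.ConnectedComponent := by
  rcases isEmpty_or_nonempty V with hV | ⟨⟨v⟩⟩
  · simp
  -- joining one representative to the representatives of all other components connects `G`
  choose r hr using fun c : G.ConnectedComponent => c.exists_rep
  set c₀ := G.connectedComponentMk v
  set S : Set (Sym2 V) := (fun c => s(r c₀, r c)) '' {c₀}ᶜ
  have hconn : (G ⊔ fromEdgeSet S).Connected := by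
    refine (connected_iff_exists_forall_reachable _).2 ⟨r c₀, fun w => ?_⟩
    have hw : (G ⊔ fromEdgeSet S).Reachable (r (G.connectedComponentMk w)) w :=
      (ConnectedComponent.exact (hr _)).mono le_sup_left
    by_cases hc : G.connectedComponentMk w = c₀
    · exact hc ▸ hw
    · refine Adj.reachable ?_ |>.trans hw
      refine Or.inr ⟨⟨_, hc, rfl⟩, fun h => hc ?_⟩
      rw [← hr (G.connectedComponentMk w), ← hr c₀, h]
  have hS : S.ncard ≤ Nat.card G.ConnectedComponent - 1 := by
    refine (Set.ncard_image_le (Set.toFinite _)).trans ?_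
    rw [Set.ncard_compl, Set.ncard_singleton]
  have hE : (G ⊔ fromEdgeSet S).edgeSet ⊆ G.edgeSet ∪ S := by
    rw [edgeSet_sup, edgeSet_fromEdgeSet]
    exact Set.union_subset_union_right _ Set.sdiff_subset
  calc Nat.card V ≤ Nat.card (G ⊔ fromEdgeSet S).edgeSet + 1 :=
        hconn.card_vert_le_card_edgeSet_add_one
    _ ≤ G.edgeSet.ncard + S.ncard + 1 := by
        rw [Nat.card_coe_set_eq]
        gcongr
        exact (Set.ncard_le_ncard hE).trans (Set.ncard_union_le _ _)
    _ ≤ Nat.card G.edgeSet + Nat.card G.ConnectedComponent := by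
        have : 0 < Nat.card G.ConnectedComponent := Nat.card_pos_iff.2 ⟨⟨c₀⟩, inferInstance⟩
        rw [Nat.card_coe_set_eq]
        omega

theorem IsTree.deleteEdges_sup_edge {T : SimpleGraph V} (hT : T.IsTree) {u v x y : V}
    (hxy : ¬ (T.deleteEdges {s(u, v)}).Reachable x y) :
    (T.deleteEdges {s(u, v)} ⊔ edge x y).IsTree := by
  set D := T.deleteEdges {s(u, v)}
  have hne : x ≠ y := by rintro rfl; exact hxy .rfl
  have hDT' : D ≤ D ⊔ edge x y := le_sup_left
  have huv : (D ⊔ edge x y).Reachable u v := by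
    have hxy' : (D ⊔ edge x y).Reachable x y := Adj.reachable (Or.inr (by simp [edge_adj, hne]))
    rcases (hT.connected x y).some.reachable_deleteEdges_singleton_cases u v with
      h | ⟨hxu, hvy⟩ | ⟨hxv, huy⟩
    · exact absurd h hxy
    · exact (hxu.mono hDT').symm.trans (hxy'.trans (hvy.mono hDT').symm)
    · exact (huy.mono hDT').trans (hxy'.symm.trans (hxv.mono hDT'))
  refine ⟨(connected_iff_exists_forall_reachable _).2 ⟨u, fun w => ?_⟩,
    (hT.isAcyclic.anti (deleteEdges_le _)).sup_edge_of_not_reachable hxy⟩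
  rcases (hT.connected u w).some.reachable_deleteEdges_singleton_cases u v with
    h | ⟨-, hvw⟩ | ⟨-, huw⟩
  · exact h.mono hDT'
  · exact huv.trans (hvw.mono hDT')
  · exact huw.mono hDT'

theorem Reachable.of_forall_adj {W : Type*} {H : SimpleGraph W} (f : V → W)
    (h : ∀ a b, G.Adj a b → H.Reachable (f a) (f b)) {u v : V} (huv : G.Reachable u v) :
    H.Reachable (f u) (f v) := by
  rw [reachable_iff_reflTransGen] at huv ⊢
  exact huv.lift' f fun a b hab => (reachable_iff_reflTransGen _ _).1 (h a b hab)

theorem Connected.card_le_ncard_crossing_add_one [Finite V] (hG : G.Connected) {κ : Type*}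
    {f : V → κ} (hf : Function.Surjective f) :
    Nat.card κ ≤ {e ∈ G.edgeSet | ¬ (e.map f).IsDiag}.ncard + 1 := by
  set Q := fromEdgeSet (Sym2.map f '' G.edgeSet)
  have hQ : Q.Connected := by
    have := hG.nonempty.map f
    refine ⟨fun i j => ?_⟩
    obtain ⟨a, rfl⟩ := hf i
    obtain ⟨b, rfl⟩ := hf j
    refine (hG a b).of_forall_adj f fun a b hab => ?_
    by_cases hfab : f a = f b
    · exact hfab ▸ .rfl
    · exact Adj.reachable ⟨⟨s(a, b), hab, rfl⟩, hfab⟩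
  have : Finite κ := Finite.of_surjective f hf
  have hsub : Q.edgeSet ⊆ Sym2.map f '' {e ∈ G.edgeSet | ¬ (e.map f).IsDiag} := by
    rw [edgeSet_fromEdgeSet]
    rintro _ ⟨⟨e, he, rfl⟩, hdiag⟩
    exact ⟨e, ⟨he, hdiag⟩, rfl⟩
  calc Nat.card κ ≤ Nat.card Q.edgeSet + 1 := hQ.card_vert_le_card_edgeSet_add_one
    _ ≤ {e ∈ G.edgeSet | ¬ (e.map f).IsDiag}.ncard + 1 := by
      rw [Nat.card_coe_set_eq]
      gcongr
      exact (Set.ncard_le_ncard hsub (Set.toFinite _)).trans (Set.ncard_image_le (Set.toFinite _))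

theorem IsAcyclic.not_reachable_deleteEdges_of_mem_edges (hG : G.IsAcyclic) {x y : V}
    {p : G.Walk x y} (hp : p.IsPath) {e : Sym2 V} (he : e ∈ p.edges) :
    ¬ (G.deleteEdges {e}).Reachable x y := by
  classical
  rintro ⟨q⟩
  have hle : G.deleteEdges {e} ≤ G := deleteEdges_le _
  have hpq : p = q.toPath.1.mapLe hle :=
    congrArg Subtype.val ((hG.subsingleton_path x y).elim ⟨p, hp⟩ ⟨_, q.toPath.2.mapLe hle⟩)
  rw [hpq, Walk.edges_mapLe_eq_edges] at he
  simpa using q.toPath.1.edges_subset_edgeSet he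

end SimpleGraph

namespace List

variable {α : Type*} [LinearOrder α] {L : List α}

theorem Pairwise.countP_getElem_lt_le (hL : L.Pairwise (· ≥ ·)) {i : ℕ} (hi : i < L.length) :
    L.countP (L[i] < ·) ≤ i := by
  have hdrop : ∀ x ∈ L.drop i, x ≤ L[i] := by
    have hsorted := hL.sublist (drop_sublist i L)
    rw [drop_eq_getElem_cons hi, pairwise_cons] at hsorted
    intro x hx
    rw [drop_eq_getElem_cons hi] at hx
    rcases mem_cons.1 hx with rfl | hx
    exacts [le_rfl, hsorted.1 x hx]
  generalize L[i] = a at hdrop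
  rw [← take_append_drop i L, countP_append,
    countP_eq_zero (l := L.drop i).2 (by simpa using hdrop), add_zero]
  exact countP_le_length.trans (length_take_le i L)

theorem Pairwise.lt_countP_getElem_le (hL : L.Pairwise (· ≥ ·)) {i : ℕ} (hi : i < L.length) :
    i < L.countP (L[i] ≤ ·) := by
  have htake : ∀ x ∈ L.take (i + 1), L[i] ≤ x := by
    have hsplit := pairwise_append.1 ((take_append_drop i L).symm ▸ hL)
    rw [take_add_one, getElem?_eq_getElem hi, Option.toList_some]
    intro x hx
    rcases mem_append.1 hx with hx | hx
    · exact hsplit.2.2 x hx _ (drop_eq_getElem_cons hi ▸ mem_cons_self)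
    · rw [mem_singleton.1 hx]
  refine lt_of_lt_of_le ?_ (take_sublist (i + 1) L).countP_le
  rw [countP_eq_length.2 (by simpa using htake)]
  simp [hi]

end List

open Function

theorem Function.Surjective.exists_apply_ne {α β : Type*} [Nontrivial β] {g : α → β}
    (hg : Surjective g) : ∃ x y, g x ≠ g y := by
  obtain ⟨i, j, hij⟩ := exists_pair_ne β
  obtain ⟨x, rfl⟩ := hg i
  obtain ⟨y, rfl⟩ := hg j
  exact ⟨x, y, hij⟩

theorem Finite.exists_surjective_fin {α : Type*} [Finite α] {n : ℕ} (h1 : 1 ≤ n)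
    (hn : n ≤ Nat.card α) : ∃ g : α → Fin n, Surjective g := by
  have := Fintype.ofFinite α
  have : Nonempty (Fin n) := ⟨⟨0, h1⟩⟩
  exact exists_surjective_iff.2 ⟨inferInstance,
    Function.Embedding.nonempty_of_card_le (by simpa [Nat.card_eq_fintype_card] using hn)⟩

section Separation

variable {V : Type*} [MetricSpace V]

-- `separation f = 0` when `f` is constant, and `maxSeparation V n = 0` when `n > #V`.
noncomputable def separation {κ : Type*} (f : V → κ) : ℝ :=
  ⨅ p : {p : V × V // f p.1 ≠ f p.2}, dist p.1.1 p.1.2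

variable (V) in
noncomputable def maxSeparation (n : ℕ) : ℝ :=
  ⨆ f : {f : V → Fin n // Surjective f}, separation f.1

variable {κ : Type*} {f : V → κ}

theorem le_separation {x y : V} (hxy : f x ≠ f y) {c : ℝ}
    (h : ∀ a b, f a ≠ f b → c ≤ dist a b) : c ≤ separation f :=
  have : Nonempty {p : V × V // f p.1 ≠ f p.2} := ⟨⟨(x, y), hxy⟩⟩
  le_ciInf fun p => h _ _ p.2

variable [Fintype V]

theorem separation_le {x y : V} (hxy : f x ≠ f y) : separation f ≤ dist x y :=
  ciInf_le (Set.finite_range _).bddBelow (⟨(x, y), hxy⟩ : {p : V × V // f p.1 ≠ f p.2})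

theorem exists_dist_eq_separation {x y : V} (hxy : f x ≠ f y) :
    ∃ a b, f a ≠ f b ∧ dist a b = separation f :=
  have : Nonempty {p : V × V // f p.1 ≠ f p.2} := ⟨⟨(x, y), hxy⟩⟩
  let ⟨p, hp⟩ := exists_eq_ciInf_of_finite (f := fun p : {p : V × V // f p.1 ≠ f p.2} =>
    dist p.1.1 p.1.2)
  ⟨p.1.1, p.1.2, p.2, hp⟩

theorem separation_pos {x y : V} (hxy : f x ≠ f y) : 0 < separation f :=
  let ⟨_, _, hab, h⟩ := exists_dist_eq_separation hxy
  h ▸ dist_pos.2 fun h => hab (h ▸ rfl)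

theorem separation_le_diam {x y : V} (hxy : f x ≠ f y) :
    separation f ≤ Metric.diam (Set.univ : Set V) :=
  (separation_le hxy).trans <|
    Metric.dist_le_diam_of_mem (Set.toFinite _).isBounded (Set.mem_univ _) (Set.mem_univ _)

variable {n : ℕ}

theorem separation_le_maxSeparation {g : V → Fin n} (hg : Surjective g) :
    separation g ≤ maxSeparation V n :=
  le_ciSup (f := fun g : {g : V → Fin n // Surjective g} => separation g.1)
    (Set.finite_range _).bddAbove ⟨g, hg⟩

theorem exists_separation_eq_maxSeparation (h1 : 1 ≤ n) (hn : n ≤ Fintype.card V) :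
    ∃ g : V → Fin n, Surjective g ∧ separation g = maxSeparation V n := by
  obtain ⟨g, hg⟩ := Finite.exists_surjective_fin h1 (Nat.card_eq_fintype_card (α := V) ▸ hn)
  have : Nonempty {g : V → Fin n // Surjective g} := ⟨⟨g, hg⟩⟩
  obtain ⟨g, hg⟩ := exists_eq_ciSup_of_finite
    (f := fun g : {g : V → Fin n // Surjective g} => separation g.1)
  exact ⟨g.1, g.2, hg⟩

theorem maxSeparation_pos (h2 : 2 ≤ n) (hn : n ≤ Fintype.card V) : 0 < maxSeparation V n :=
  have := Fin.nontrivial_iff_two_le.2 h2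
  let ⟨_, hg, hsep⟩ := exists_separation_eq_maxSeparation (by omega) hn
  let ⟨_, _, hxy⟩ := hg.exists_apply_ne
  hsep ▸ separation_pos hxy

theorem maxSeparation_le_diam (h2 : 2 ≤ n) (hn : n ≤ Fintype.card V) :
    maxSeparation V n ≤ Metric.diam (Set.univ : Set V) :=
  have := Fin.nontrivial_iff_two_le.2 h2
  let ⟨_, hg, hsep⟩ := exists_separation_eq_maxSeparation (by omega) hn
  let ⟨_, _, hxy⟩ := hg.exists_apply_ne
  hsep ▸ separation_le_diam hxy

end Separation

section MST

open SimpleGraph Finset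

variable {V : Type} [MetricSpace V]

def edgeLength : Sym2 V → ℝ := Sym2.lift ⟨fun x y => dist x y, fun _ _ => dist_comm _ _⟩

@[simp] theorem edgeLength_mk (x y : V) : edgeLength s(x, y) = dist x y := rfl

variable [Fintype V]

theorem graphLength_eq_sum (G : SimpleGraph V) :
    graphLength G = ∑ e ∈ G.edgeSet.toFinite.toFinset, edgeLength e := rfl

theorem IsMST.edgeLength_le_dist {T : SimpleGraph V} (hT : IsMST T) {e : Sym2 V}
    (he : e ∈ T.edgeSet) {x y : V} (hxy : ¬ (T.deleteEdges {e}).Reachable x y) :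
    edgeLength e ≤ dist x y := by
  classical
  induction e using Sym2.ind with | _ u v => ?_
  have hne : x ≠ y := by rintro rfl; exact hxy .rfl
  have hxyT : s(x, y) ∉ T.edgeSet.toFinite.toFinset.erase s(u, v) := fun h =>
    hxy (Adj.reachable (by simpa [and_comm] using h))
  have hedges : (T.deleteEdges {s(u, v)} ⊔ edge x y).edgeSet.toFinite.toFinset =
      insert s(x, y) (T.edgeSet.toFinite.toFinset.erase s(u, v)) := by
    ext f
    simp only [Set.Finite.mem_toFinset, edgeSet_sup, edgeSet_deleteEdges, edgeSet_edge_of_ne hne,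
      mem_insert, mem_erase, Set.mem_union, Set.mem_sdiff, Set.mem_singleton_iff]
    tauto
  -- exchanging `s(u, v)` for `s(x, y)` gives another spanning tree
  have := hT.2 _ (hT.1.deleteEdges_sup_edge hxy)
  rw [graphLength_eq_sum, graphLength_eq_sum, hedges, sum_insert hxyT,
    sum_erase_eq_sub (by simpa using he)] at this
  simp only [edgeLength_mk] at this ⊢
  linarith

theorem countP_sort_edgeLengths (G : SimpleGraph V) (p : ℝ → Prop) [DecidablePred p] :
    ((edgeLengths G).sort (· ≥ ·)).countP p =
      #{e ∈ G.edgeSet.toFinite.toFinset | p (edgeLength e)} := by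
  rw [← Multiset.coe_countP, Multiset.sort_eq, edgeLengths, Multiset.countP_map, Finset.card_def,
    Finset.filter_val]
  rfl

theorem length_sort_edgeLengths (G : SimpleGraph V) :
    ((edgeLengths G).sort (· ≥ ·)).length = Nat.card G.edgeSet := by
  rw [Multiset.length_sort, edgeLengths, Multiset.card_map, ← Finset.card_def,
    Nat.card_coe_set_eq, Set.ncard_eq_toFinset_card]

theorem SimpleGraph.Connected.maxSeparation_le_getElem_sort {T : SimpleGraph V}
    (hT : T.Connected) {i : ℕ} (hi : i < ((edgeLengths T).sort (· ≥ ·)).length)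
    (hV : i + 2 ≤ Fintype.card V) :
    maxSeparation V (i + 2) ≤ ((edgeLengths T).sort (· ≥ ·))[i] := by
  set L := (edgeLengths T).sort (· ≥ ·)
  obtain ⟨g, hg, hsep⟩ := exists_separation_eq_maxSeparation (by omega) hV
  have hcross := hT.card_le_ncard_crossing_add_one hg
  have hlong : #{e ∈ T.edgeSet.toFinite.toFinset | L[i] < edgeLength e} ≤ i :=
    countP_sort_edgeLengths T (L[i] < ·) ▸ (Multiset.pairwise_sort _ _).countP_getElem_lt_le hi
  obtain ⟨e, ⟨-, hdiag⟩, hle⟩ :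
      ∃ e ∈ {e ∈ T.edgeSet | ¬ (e.map g).IsDiag}, edgeLength e ≤ L[i] := by
    by_contra! h
    have hsub : {e ∈ T.edgeSet | ¬ (e.map g).IsDiag} ⊆
        ↑{e ∈ T.edgeSet.toFinite.toFinset | L[i] < edgeLength e} := fun e he => by
      simpa using ⟨he.1, h e he⟩
    have := Set.ncard_le_ncard hsub
    rw [Set.ncard_coe_finset] at this
    simp only [Nat.card_eq_fintype_card, Fintype.card_fin] at hcross
    omega
  induction e using Sym2.ind with | _ a b => ?_
  exact hsep ▸ (separation_le (by simpa using hdiag)).trans hle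

theorem IsMST.getElem_sort_le_maxSeparation {T : SimpleGraph V} (hT : IsMST T) {i : ℕ}
    (hi : i < ((edgeLengths T).sort (· ≥ ·)).length) :
    ((edgeLengths T).sort (· ≥ ·))[i] ≤ maxSeparation V (i + 2) := by
  classical
  set L := (edgeLengths T).sort (· ≥ ·)
  obtain ⟨F, hFlong, hFcard⟩ := Finset.exists_subset_card_eq
    (s := {e ∈ T.edgeSet.toFinite.toFinset | L[i] ≤ edgeLength e}) (n := i + 1)
    (countP_sort_edgeLengths T (L[i] ≤ ·) ▸ (Multiset.pairwise_sort _ _).lt_countP_getElem_le hi)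
  have hFT : (F : Set (Sym2 V)) ⊆ T.edgeSet := fun e he => by
    simpa using (mem_filter.1 (hFlong he)).1
  -- `F` consists of `i + 1` longest edges; the components of `T - F` give the partition
  set D := T.deleteEdges F
  have hD : Nat.card D.edgeSet + (i + 1) = Nat.card T.edgeSet := by
    rw [Nat.card_coe_set_eq, Nat.card_coe_set_eq, edgeSet_deleteEdges, Set.ncard_sdiff hFT,
      Set.ncard_coe_finset, hFcard]
    have : i + 1 ≤ T.edgeSet.ncard := hFcard ▸ Set.ncard_coe_finset F ▸ Set.ncard_le_ncard hFT
    omega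
  have hT' := (isTree_iff_connected_and_card.1 hT.1).2
  have hcc : i + 2 ≤ Nat.card D.ConnectedComponent := by
    have := D.card_le_card_edgeSet_add_card_connectedComponent
    omega
  obtain ⟨c, hc⟩ := Finite.exists_surjective_fin (by omega) hcc
  set g := c ∘ D.connectedComponentMk
  have hg : Surjective g := hc.comp Quot.mk_surjective
  have hsep : ∀ a b, g a ≠ g b → L[i] ≤ dist a b := by
    intro a b hab
    have hnr : ¬ D.Reachable a b := fun h => hab (by simp [g, ConnectedComponent.eq.2 h])
    obtain ⟨P, hP⟩ := hT.1.connected.exists_isPath a b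
    obtain ⟨e, heF, heP⟩ := P.exists_mem_edges_of_not_reachable_deleteEdges hnr
    calc L[i] ≤ edgeLength e := (mem_filter.1 (hFlong heF)).2
      _ ≤ dist a b := hT.edgeLength_le_dist (P.edges_subset_edgeSet heP)
        (hT.1.isAcyclic.not_reachable_deleteEdges_of_mem_edges hP heP)
  have := Fin.nontrivial_iff_two_le.2 (le_add_self : 2 ≤ i + 2)
  obtain ⟨x, y, hxy⟩ := hg.exists_apply_ne
  exact (le_separation hxy hsep).trans (separation_le_maxSeparation hg)

theorem IsMST.sort_edgeLengths_eq {T : SimpleGraph V} (hT : IsMST T) :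
    (edgeLengths T).sort (· ≥ ·) =
      (List.range (Fintype.card V - 1)).map fun i => maxSeparation V (i + 2) := by
  have hlen : ((edgeLengths T).sort (· ≥ ·)).length = Fintype.card V - 1 := by
    have := (isTree_iff_connected_and_card.1 hT.1).2
    rw [length_sort_edgeLengths, ← Nat.card_eq_fintype_card]
    omega
  refine List.ext_getElem (by simp [hlen]) fun i hi _ => ?_
  rw [List.getElem_map, List.getElem_range]
  exact le_antisymm (hT.getElem_sort_le_maxSeparation hi)
    (hT.1.connected.maxSeparation_le_getElem_sort hi (by omega))

end MST

namespace GromovHausdorff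

variable {X Y : Type*} [MetricSpace X] [CompactSpace X] [Nonempty X]
  [MetricSpace Y] [CompactSpace Y] [Nonempty Y]

theorem ghDist_comm : ghDist X Y = ghDist Y X := dist_comm _ _

def IsCorrespondence (R : Set (X × Y)) : Prop :=
  (∀ x, ∃ y, (x, y) ∈ R) ∧ ∀ y, ∃ x, (x, y) ∈ R

theorem two_mul_ghDist_le_of_surjective {Φ : X → Y} (hΦ : Surjective Φ) {ε : ℝ}
    (H : ∀ x x', |dist x x' - dist (Φ x) (Φ x')| ≤ ε) : 2 * ghDist X Y ≤ ε := by
  have := ghDist_le_of_approx_subsets (s := Set.univ) (fun x => Φ x) (ε₁ := 0) (ε₃ := 0)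
    (fun x => ⟨x, trivial, by simp⟩)
    (fun y => let ⟨x, hx⟩ := hΦ y; ⟨⟨x, trivial⟩, by simp [hx]⟩) (fun x x' => H x x')
  linarith

theorem le_two_mul_ghDist {c : ℝ}
    (H : ∀ R : Set (X × Y), IsCorrespondence R →
      ∀ δ, (∀ p ∈ R, ∀ q ∈ R, |dist p.1 q.1 - dist p.2 q.2| ≤ δ) → c ≤ δ) :
    c ≤ 2 * ghDist X Y := by
  refine le_of_forall_gt_imp_ge_of_dense fun δ hδ => ?_
  obtain ⟨Φ, Ψ, hΦ, hΨ, heq⟩ := ghDist_eq_hausdorffDist X Y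
  have hfin : Metric.hausdorffEDist (Set.range Φ) (Set.range Ψ) ≠ ⊤ :=
    Metric.hausdorffEDist_ne_top_of_nonempty_of_bounded (Set.range_nonempty _)
      (Set.range_nonempty _) (isCompact_range hΦ.continuous).isBounded
      (isCompact_range hΨ.continuous).isBounded
  have hlt : Metric.hausdorffDist (Set.range Φ) (Set.range Ψ) < δ / 2 := by linarith
  refine H {p | dist (Φ p.1) (Ψ p.2) < δ / 2} ⟨fun x => ?_, fun y => ?_⟩ δ ?_
  · obtain ⟨_, ⟨y, rfl⟩, hy⟩ :=
      Metric.exists_dist_lt_of_hausdorffDist_lt (Set.mem_range_self x) hlt hfin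
    exact ⟨y, hy⟩
  · obtain ⟨_, ⟨x, rfl⟩, hx⟩ :=
      Metric.exists_dist_lt_of_hausdorffDist_lt' (Set.mem_range_self y) hlt hfin
    exact ⟨x, hx⟩
  · rintro ⟨x, y⟩ (hxy : dist _ _ < _) ⟨x', y'⟩ (hxy' : dist _ _ < _)
    rw [← hΦ.dist_eq x x', ← hΨ.dist_eq y y', abs_sub_le_iff]
    constructor <;> linarith [dist_triangle4 (Φ x) (Ψ y) (Ψ y') (Φ x'),
      dist_triangle4 (Ψ y) (Φ x) (Φ x') (Ψ y'), dist_comm (Φ x) (Ψ y), dist_comm (Φ x') (Ψ y')]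

end GromovHausdorff

section Simplex

open GromovHausdorff

theorem two_mul_ghDist_unit {Y : Type*} [MetricSpace Y] [CompactSpace Y] [Nonempty Y] :
    2 * ghDist Unit Y = Metric.diam (Set.univ : Set Y) := by
  have hbdd : Bornology.IsBounded (Set.univ : Set Y) := isCompact_univ.isBounded
  refine le_antisymm ?_ (le_two_mul_ghDist fun R hR δ hδ => ?_)
  · rw [ghDist_comm]
    refine two_mul_ghDist_le_of_surjective (Φ := fun _ => ())
      (fun _ => ⟨Classical.arbitrary Y, rfl⟩) fun y y' => ?_
    rw [dist_self, sub_zero, abs_of_nonneg dist_nonneg]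
    exact Metric.dist_le_diam_of_mem hbdd trivial trivial
  · have hdist : ∀ y y' : Y, dist y y' ≤ δ := fun y y' => by
      obtain ⟨u, hu⟩ := hR.2 y
      obtain ⟨u', hu'⟩ := hR.2 y'
      simpa [Subsingleton.elim u u'] using hδ _ hu _ hu'
    exact Metric.diam_le_of_forall_dist_le
      ((dist_nonneg).trans (hdist (Classical.arbitrary Y) (Classical.arbitrary Y)))
      fun y _ y' _ => hdist y y'

variable {Δ B : Type} [MetricSpace Δ] [Fintype Δ] [Nonempty Δ] [MetricSpace B] [Fintype B]
  [Nonempty B] {n : ℕ} {l : ℝ}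

theorem le_two_mul_ghDist_of_card_lt (hΔ : IsSimplexOf Δ n l) (hB : Fintype.card B < n) :
    l ≤ 2 * ghDist Δ B := by
  refine le_two_mul_ghDist fun R hR δ hδ => ?_
  choose g hg using hR.1
  obtain ⟨t, t', htt', hgt⟩ := Fintype.exists_ne_map_eq_of_card_lt g (hΔ.1 ▸ hB)
  have := hδ _ (hg t) _ (hg t')
  rw [hΔ.2 t t' htt', hgt, dist_self, sub_zero] at this
  exact (le_abs_self l).trans this

theorem two_mul_ghDist_le_of_isSimplexOf (hΔ : IsSimplexOf Δ n l) (h2 : 2 ≤ n)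
    (hn : n ≤ Fintype.card B) (hl : 2 * Metric.diam (Set.univ : Set B) ≤ l) :
    2 * ghDist Δ B ≤ l - maxSeparation B n := by
  have := Fin.nontrivial_iff_two_le.2 h2
  obtain ⟨g, hg, hsep⟩ := exists_separation_eq_maxSeparation (by omega) hn
  have hdiam : ∀ x y : B, dist x y ≤ Metric.diam (Set.univ : Set B) := fun x y =>
    Metric.dist_le_diam_of_mem (Set.toFinite _).isBounded trivial trivial
  have hτ := maxSeparation_le_diam h2 hn
  set e := Fintype.equivFinOfCardEq hΔ.1
  rw [ghDist_comm]
  refine two_mul_ghDist_le_of_surjective (Φ := e.symm ∘ g) (e.symm.surjective.comp hg)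
    fun x y => ?_
  by_cases hxy : g x = g y
  · rw [comp_apply, comp_apply, hxy, dist_self, sub_zero, abs_of_nonneg dist_nonneg]
    linarith [hdiam x y]
  · rw [comp_apply, comp_apply, hΔ.2 _ _ (e.symm.injective.ne hxy), abs_sub_comm,
      abs_of_nonneg (by linarith [hdiam x y, Metric.diam_nonneg (s := (Set.univ : Set B))])]
    linarith [separation_le hxy]

theorem le_two_mul_ghDist_of_isSimplexOf (hΔ : IsSimplexOf Δ n l) (h2 : 2 ≤ n)
    (hn : n ≤ Fintype.card B) : l - maxSeparation B n ≤ 2 * ghDist Δ B := by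
  have := Fin.nontrivial_iff_two_le.2 h2
  refine le_two_mul_ghDist fun R hR δ hδ => ?_
  -- either `g` partitions `B` into `n` parts, or some vertex of `Δ` corresponds to a point
  -- that also corresponds to another vertex
  choose g hg using hR.2
  by_cases hsurj : Surjective g
  · set e := Fintype.equivFinOfCardEq hΔ.1
    have hf : Surjective (e ∘ g) := e.surjective.comp hsurj
    obtain ⟨x, y, hxy⟩ := hf.exists_apply_ne
    obtain ⟨a, b, hab, hdist⟩ := exists_dist_eq_separation hxy
    have := hδ _ (hg a) _ (hg b)
    rw [hΔ.2 _ _ fun h => hab (by simp only [comp_apply, show g a = g b from h])] at this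
    linarith [le_abs_self (l - dist a b), separation_le_maxSeparation hf]
  · obtain ⟨t, ht⟩ := not_forall.1 hsurj
    choose h hh using hR.1
    have := hδ _ (hh t) _ (hg (h t))
    rw [hΔ.2 _ _ fun h => ht ⟨_, h.symm⟩, dist_self, sub_zero] at this
    linarith [le_abs_self l, maxSeparation_pos h2 hn]

theorem two_mul_ghDist_eq_of_isSimplexOf (hΔ : IsSimplexOf Δ n l) (h2 : 2 ≤ n)
    (hn : n ≤ Fintype.card B) (hl : 2 * Metric.diam (Set.univ : Set B) ≤ l) :
    2 * ghDist Δ B = l - maxSeparation B n :=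
  le_antisymm (two_mul_ghDist_le_of_isSimplexOf hΔ h2 hn hl)
    (le_two_mul_ghDist_of_isSimplexOf hΔ h2 hn)

theorem ghDist_lt_ghDist_of_card_lt {A : Type} [MetricSpace A] [Fintype A] [Nonempty A]
    (hΔ : IsSimplexOf Δ (Fintype.card A + 1) l) (hAB : Fintype.card A < Fintype.card B)
    (hl : 2 * Metric.diam (Set.univ : Set B) ≤ l) : ghDist Δ B < ghDist Δ A := by
  have h2 : 2 ≤ Fintype.card A + 1 := Nat.succ_le_succ Fintype.card_pos
  have hA := le_two_mul_ghDist_of_card_lt (B := A) hΔ (lt_add_one _)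
  have hB := two_mul_ghDist_eq_of_isSimplexOf hΔ h2 hAB hl
  linarith [maxSeparation_pos h2 hAB]

end Simplex

theorem exists_isSimplexOf (n : ℕ) {l : ℝ} (hl : 0 < l) :
    ∃ _ : MetricSpace (Fin n), IsSimplexOf (Fin n) n l := by
  let inst : MetricSpace (Fin n) :=
    { dist x y := if x = y then 0 else l
      dist_self _ := if_pos rfl
      dist_comm x y := by simp only [eq_comm]
      dist_triangle x y z := by split_ifs <;> simp_all <;> linarith
      eq_of_dist_eq_zero {x y} h := by_contra fun hxy => hl.ne' (by simpa [hxy] using h) }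
  exact ⟨inst, Fintype.card_fin n, fun x y hxy => if_neg hxy⟩

/-- If `X` and `Y` are finite metric spaces whose Gromov–Hausdorff distances to every
simplex `lΔₙ` (`n ≥ 1`, `l ≥ 0`) coincide, then `#X = #Y`, `diam X = diam Y`, and the
mst-spectra of `X` and `Y` coincide (the descending vectors of edge lengths of any
minimal spanning trees on `X` and `Y` are equal). -/
theorem card_diam_spectrum_eq_of_indistinguishable (X Y : Type) [MetricSpace X] [Fintype X]
    [Nonempty X] [MetricSpace Y] [Fintype Y] [Nonempty Y]
    (h : ∀ (n : ℕ), 1 ≤ n → ∀ (l : ℝ), 0 ≤ l →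
      ∀ (Δ : Type) (_ : MetricSpace Δ) (_ : Fintype Δ) (_ : Nonempty Δ),
        IsSimplexOf Δ n l → GromovHausdorff.ghDist Δ X = GromovHausdorff.ghDist Δ Y) :
    Fintype.card X = Fintype.card Y ∧
    Metric.diam (Set.univ : Set X) = Metric.diam (Set.univ : Set Y) ∧
    ∀ (T_X : SimpleGraph X) (T_Y : SimpleGraph Y), IsMST T_X → IsMST T_Y →
      (edgeLengths T_X).sort (· ≥ ·) = (edgeLengths T_Y).sort (· ≥ ·) := by
  have hdiam : Metric.diam (Set.univ : Set X) = Metric.diam (Set.univ : Set Y) := by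
    have hunit : IsSimplexOf Unit 1 0 := ⟨rfl, fun x y hxy => absurd (Subsingleton.elim x y) hxy⟩
    rw [← two_mul_ghDist_unit, ← two_mul_ghDist_unit, h 1 le_rfl 0 le_rfl Unit _ _ _ hunit]
  set l := 2 * Metric.diam (Set.univ : Set Y) + 1
  have hl : 0 < l := by positivity
  have hlX : 2 * Metric.diam (Set.univ : Set X) ≤ l := by linarith
  have hlY : 2 * Metric.diam (Set.univ : Set Y) ≤ l := by linarith
  have hsimplex : ∀ n, 1 ≤ n → ∃ (Δ : Type) (_ : MetricSpace Δ) (_ : Fintype Δ) (_ : Nonempty Δ),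
      IsSimplexOf Δ n l ∧ GromovHausdorff.ghDist Δ X = GromovHausdorff.ghDist Δ Y :=
    fun n hn =>
      let ⟨_, hΔ⟩ := exists_isSimplexOf n hl
      ⟨Fin n, _, _, ⟨⟨0, hn⟩⟩, hΔ, h n hn l hl.le _ _ _ _ hΔ⟩
  have hcard : Fintype.card X = Fintype.card Y := by
    by_contra hne
    rcases Nat.lt_or_gt_of_ne hne with hlt | hlt
    · obtain ⟨Δ, _, _, _, hΔ, heq⟩ := hsimplex (Fintype.card X + 1) le_add_self
      exact (ghDist_lt_ghDist_of_card_lt hΔ hlt hlY).ne' heq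
    · obtain ⟨Δ, _, _, _, hΔ, heq⟩ := hsimplex (Fintype.card Y + 1) le_add_self
      exact (ghDist_lt_ghDist_of_card_lt hΔ hlt hlX).ne heq
  refine ⟨hcard, hdiam, fun T_X T_Y hT_X hT_Y => ?_⟩
  rw [hT_X.sort_edgeLengths_eq, hT_Y.sort_edgeLengths_eq, hcard]
  refine List.map_congr_left fun i hi => ?_
  have hi : i + 2 ≤ Fintype.card Y := by simp only [List.mem_range] at hi; omega
  obtain ⟨Δ, _, _, _, hΔ, heq⟩ := hsimplex (i + 2) le_add_self
  have hX := two_mul_ghDist_eq_of_isSimplexOf hΔ le_add_self (hcard ▸ hi) hlX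
  have hY := two_mul_ghDist_eq_of_isSimplexOf hΔ le_add_self hi hlY
  linarith
end
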